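/- Let G = (V,E) be a finite simple graph, let k > 0 be a natural number, and let u ∈ V be a vertex such that for every vertex v ∈ V ∖ N[u] one has ω(G[N(u)]) − k > ω(G[N(v)]). Then there exists an optimal interdiction set containing u, i.e., there exists S ⊆ V with |S| ≤ k, u ∈ S, and ω(G[V ∖ S]) = θ(G,k). -/

import Mathlib

/-!
Take a set `S` attaining `θ(G, k)`; if `u ∉ S`, trade a vertex `w` of `S` for `u`. A clique
avoiding the new set either contains a vertex `v` outside `N[u]`, and then has at most
`ω(N(v)) + 1 ≤ ω(N(u)) - k` vertices, or lies in `N(u)` and, apart from possibly `w`, in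
`N(u) ∖ S`. Either way it is no larger than `u` together with a maximum clique of `N(u) ∖ S`,
a clique of `G - S` with at least `ω(N(u)) - |S| + 1` vertices. So the exchange keeps the set
optimal.
-/

open SimpleGraph

/-- `theta G k` is the minimum, over all vertex subsets `S` with `|S| ≤ k`, of the
clique number of the subgraph of `G` induced on the complement of `S`. -/
noncomputable def theta {V : Type*} (G : SimpleGraph V) (k : ℕ) : ℕ :=
  sInf {m | ∃ S : Finset V, S.card ≤ k ∧ (G.induce ((↑S : Set V)ᶜ)).cliqueNum = m}

namespace SimpleGraph

open Finset

variable {V : Type*} {G : SimpleGraph V}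

lemma exists_isNClique_cliqueNum_induce (A : Set V) :
    ∃ t : Finset V, ↑t ⊆ A ∧ G.IsNClique (G.induce A).cliqueNum t := by
  obtain ⟨s, hs⟩ := (G.induce A).exists_isNClique_cliqueNum
  refine ⟨s.map (.subtype _), ?_, (isNClique_induce_iff A s _).1 hs⟩
  simp

variable [Finite V]

lemma IsClique.card_le_cliqueNum_induce {A : Set V} {t : Finset V} (ht : G.IsClique t)
    (htA : ↑t ⊆ A) : #t ≤ (G.induce A).cliqueNum := by
  classical
  have hmap : (t.subtype (· ∈ A)).map (.subtype _) = t := subtype_map_of_mem fun _ hx ↦ htA hx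
  have hclique : (G.induce A).IsNClique #t (t.subtype (· ∈ A)) := by
    rw [isNClique_induce_iff, hmap]
    exact ⟨ht, rfl⟩
  exact hclique.card_eq ▸ hclique.isClique.card_le_cliqueNum

lemma cliqueNum_induce_le_iff {A : Set V} {m : ℕ} :
    (G.induce A).cliqueNum ≤ m ↔ ∀ t : Finset V, ↑t ⊆ A → G.IsClique t → #t ≤ m := by
  refine ⟨fun h t htA ht ↦ (ht.card_le_cliqueNum_induce htA).trans h, fun h ↦ ?_⟩
  obtain ⟨t, htA, ht⟩ := G.exists_isNClique_cliqueNum_induce A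
  exact ht.card_eq ▸ h t htA ht.isClique

lemma cliqueNum_induce_le_sdiff_add_card [DecidableEq V] (A : Set V)
    (T : Finset V) : (G.induce A).cliqueNum ≤ (G.induce (A \ ↑T)).cliqueNum + #T := by
  obtain ⟨t, htA, ht⟩ := G.exists_isNClique_cliqueNum_induce A
  have hdiff : #(t \ T) ≤ (G.induce (A \ ↑T)).cliqueNum :=
    (ht.isClique.subset (by simp)).card_le_cliqueNum_induce
      (by rw [coe_sdiff]; exact Set.sdiff_subset_sdiff_left htA)
  calc (G.induce A).cliqueNum = #t := ht.card_eq.symm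
    _ ≤ #(t \ T) + #T := card_le_card_sdiff_add_card
    _ ≤ _ := by omega

lemma IsClique.card_le_cliqueNum_induce_neighborSet_add_one [DecidableEq V] {t : Finset V}
    {v : V} (ht : G.IsClique t) (hv : v ∈ t) :
    #t ≤ (G.induce (G.neighborSet v)).cliqueNum + 1 := by
  have hsub : ↑(t.erase v) ⊆ G.neighborSet v := fun x hx ↦
    ht (mem_of_mem_erase hx) hv (ne_of_mem_erase hx) |>.symm
  have := (ht.subset (by simp)).card_le_cliqueNum_induce hsub
  rw [card_erase_of_mem hv] at this
  omega

lemma cliqueNum_induce_neighborSet_sdiff_add_one_le {S : Set V} {u : V} (hu : u ∉ S) :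
    (G.induce (G.neighborSet u \ S)).cliqueNum + 1 ≤ (G.induce Sᶜ).cliqueNum := by
  classical
  obtain ⟨t, htA, ht⟩ := G.exists_isNClique_cliqueNum_induce (G.neighborSet u \ S)
  have hut : u ∉ t := fun hu' ↦ G.loopless.irrefl u (htA hu').1
  have hclique : G.IsClique ↑(insert u t) := by
    rw [coe_insert]
    exact ht.isClique.insert fun b hb _ ↦ (htA hb).1
  have hsub : ↑(insert u t) ⊆ Sᶜ := by
    rw [coe_insert]
    exact Set.insert_subset hu fun x hx ↦ (htA hx).2
  have := hclique.card_le_cliqueNum_induce hsub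
  rwa [card_insert_of_notMem hut, ht.card_eq] at this

theorem cliqueNum_induce_compl_insert_erase_le [DecidableEq V] {S : Finset V} {u : V} (w : V)
    (huS : u ∉ S)
    (h : ∀ v ∉ insert u (G.neighborSet u),
      (G.induce (G.neighborSet v)).cliqueNum + #S < (G.induce (G.neighborSet u)).cliqueNum) :
    (G.induce (↑(insert u (S.erase w)))ᶜ).cliqueNum ≤ (G.induce (↑S)ᶜ).cliqueNum := by
  have hlow := cliqueNum_induce_neighborSet_sdiff_add_one_le (G := G) (S := ↑S) huS
  have hremove := G.cliqueNum_induce_le_sdiff_add_card (G.neighborSet u) S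
  refine cliqueNum_induce_le_iff.2 fun t ht hclique ↦ ?_
  by_cases hfar : ∃ v ∈ t, v ∉ insert u (G.neighborSet u)
  · obtain ⟨v, hvt, hv⟩ := hfar
    have hcard := hclique.card_le_cliqueNum_induce_neighborSet_add_one hvt
    have hsmall := h v hv
    omega
  · push Not at hfar
    have hnear : ↑(t.erase w) ⊆ G.neighborSet u \ ↑S := by
      intro x hx
      obtain ⟨hxw, hxt⟩ := mem_erase.1 hx
      have hxS' : x ∉ insert u (S.erase w) := ht hxt
      simp only [mem_insert, mem_erase, not_or, not_and] at hxS'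
      exact ⟨(Set.mem_insert_iff.1 (hfar x hxt)).resolve_left hxS'.1, hxS'.2 hxw⟩
    have hcard := (hclique.subset (by simp)).card_le_cliqueNum_induce hnear
    have herase := pred_card_le_card_erase (s := t) (a := w)
    omega

end SimpleGraph

lemma exists_card_le_cliqueNum_compl_eq_theta {V : Type*} (G : SimpleGraph V) (k : ℕ) :
    ∃ S : Finset V, S.card ≤ k ∧ (G.induce (↑S : Set V)ᶜ).cliqueNum = theta G k :=
  Nat.sInf_mem (s := {m | ∃ S : Finset V, S.card ≤ k ∧ (G.induce (↑S : Set V)ᶜ).cliqueNum = m})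
    ⟨_, ∅, by simp, rfl⟩

lemma theta_le_cliqueNum_compl {V : Type*} (G : SimpleGraph V) {k : ℕ} {S : Finset V}
    (hS : S.card ≤ k) : theta G k ≤ (G.induce (↑S : Set V)ᶜ).cliqueNum :=
  Nat.sInf_le ⟨S, hS, rfl⟩

theorem interdiction_optimal_set {V : Type*} [Fintype V] (G : SimpleGraph V) (k : ℕ)
    (hk : 0 < k) (u : V)
    (h : ∀ v : V, v ∉ insert u (G.neighborSet u) →
      ((G.induce (G.neighborSet u)).cliqueNum : ℤ) - (k : ℤ) >
        ((G.induce (G.neighborSet v)).cliqueNum : ℤ)) :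
    ∃ S : Finset V, S.card ≤ k ∧ u ∈ S ∧
      (G.induce ((↑S : Set V)ᶜ)).cliqueNum = theta G k := by
  classical
  obtain ⟨S, hSk, hS⟩ := exists_card_le_cliqueNum_compl_eq_theta G k
  by_cases huS : u ∈ S
  · exact ⟨S, hSk, huS, hS⟩
  obtain ⟨w, hw⟩ : ∃ w, (S.erase w).card < k := by
    rcases S.eq_empty_or_nonempty with rfl | ⟨w, hw⟩
    · exact ⟨u, by simpa using hk⟩
    · exact ⟨w, (Finset.card_erase_lt_of_mem hw).trans_le hSk⟩
  have hS' : (insert u (S.erase w)).card ≤ k := (Finset.card_insert_le _ _).trans hw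
  refine ⟨_, hS', Finset.mem_insert_self _ _, le_antisymm ?_ (theta_le_cliqueNum_compl G hS')⟩
  rw [← hS]
  exact cliqueNum_induce_compl_insert_erase_le w huS fun v hv ↦ by have := h v hv; omega
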